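/- arXiv:2007.09524 — 3 statements merged into one kernel-verified Lean document; each statement's English description precedes it below -/
import Mathlib

section
/- Under the hypotheses of the model-minimization lemma, the minimizer V of the convex model over the tangent space satisfies ⟨∇f(U), V⟩ + h(c(U) + J(U)V) − h(c(U)) ≤ −(1/t)‖V‖_F². -/
open Matrix BigOperators

noncomputable def frob {m k : ℕ} (A : Matrix (Fin m) (Fin k) ℝ) : ℝ :=
  Real.sqrt (∑ i, ∑ j, (A i j) ^ 2)

noncomputable def inp {m k : ℕ} (A B : Matrix (Fin m) (Fin k) ℝ) : ℝ :=
  ∑ i, ∑ j, A i j * B i j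

/-- The minimizer V of the convex model over the tangent space satisfies
⟨∇f(U),V⟩ + h(c(U)+J(U)V) − h(c(U)) ≤ −(1/t)‖V‖². -/
theorem stmt_5 (n C : ℕ) (t : ℝ) (ht : 0 < t)
    (T : Submodule ℝ (Matrix (Fin n) (Fin C) ℝ))
    (gradf : Matrix (Fin n) (Fin C) ℝ)
    (cU : Matrix (Fin n) (Fin n) ℝ)
    (J : Matrix (Fin n) (Fin C) ℝ →ₗ[ℝ] Matrix (Fin n) (Fin n) ℝ)
    (h : Matrix (Fin n) (Fin n) ℝ → ℝ)
    (hconv : ConvexOn ℝ Set.univ h)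
    (V : Matrix (Fin n) (Fin C) ℝ) (hVT : V ∈ T)
    (hmin : ∀ W ∈ T,
      inp gradf V + h (cU + J V) + 1 / (2 * t) * frob V ^ 2 ≤
      inp gradf W + h (cU + J W) + 1 / (2 * t) * frob W ^ 2) :
    inp gradf V + h (cU + J V) - h cU ≤ -(1 / t) * frob V ^ 2 := by
  have hfrob : ∀ (X : Matrix (Fin n) (Fin C) ℝ),
      frob X ^ 2 = ∑ i, ∑ j, (X i j) ^ 2 := by
    intro X
    rw [frob, Real.sq_sqrt]
    positivity
  set b : ℝ := ∑ i, ∑ j, (V i j) ^ 2 with hb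
  have hb0 : 0 ≤ b :=
    Finset.sum_nonneg fun i _ => Finset.sum_nonneg fun j _ => sq_nonneg _
  have hfv : frob V ^ 2 = b := hfrob V
  set L : ℝ := inp gradf V with hL
  set H : ℝ := h (cU + J V) with hH
  have key : ∀ α ∈ Set.Ioo (0:ℝ) 1,
      L + H - h cU ≤ -((1 + α) / (2 * t)) * b := by
    rintro α ⟨hα0, hα1⟩
    have hm := hmin (α • V) (T.smul_mem α hVT)
    have hinp : inp gradf (α • V) = α * L := by
      simp only [hL, inp, Matrix.smul_apply, smul_eq_mul, Finset.mul_sum]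
      congr 1; funext i; congr 1; funext j; ring
    have hJ : J (α • V) = α • J V := J.map_smul α V
    have hfav : frob (α • V) ^ 2 = α ^ 2 * b := by
      rw [hfrob]
      simp only [Matrix.smul_apply, smul_eq_mul, mul_pow, hb, Finset.mul_sum]
    have hc := hconv.2 (Set.mem_univ cU) (Set.mem_univ (cU + J V))
      (by linarith : (0:ℝ) ≤ 1 - α) hα0.le (by ring : (1 - α) + α = 1)
    have heq : (1 - α) • cU + α • (cU + J V) = cU + α • J V := by
      module
    rw [heq] at hc
    simp only [smul_eq_mul] at hc
    rw [hinp, hJ, hfav, hfv] at hm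
    have h1α : (0:ℝ) < 1 - α := by linarith
    have h2 : (1 - α) * (L + H - h cU) ≤ (1 - α) * (-((1 + α) / (2 * t)) * b) := by
      have ht' : t ≠ 0 := ne_of_gt ht
      have expand : (1 - α) * (-((1 + α) / (2 * t)) * b)
          = (α ^ 2 - 1) * (1 / (2 * t)) * b := by
        field_simp; ring
      rw [expand]
      nlinarith [hm, hc]
    exact le_of_mul_le_mul_left h2 h1α
  have hIoo : Set.Ioo (0:ℝ) 1 ∈ nhdsWithin (1:ℝ) (Set.Iio 1) := by
    rw [mem_nhdsWithin]
    exact ⟨Set.Ioi 0, isOpen_Ioi, by norm_num, by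
      rintro x ⟨hx1, hx2⟩; exact ⟨hx1, hx2⟩⟩
  have hlim : Filter.Tendsto (fun α : ℝ => -((1 + α) / (2 * t)) * b)
      (nhdsWithin (1:ℝ) (Set.Iio 1)) (nhds (-(1 / t) * b)) := by
    have hcont : Continuous (fun α : ℝ => -((1 + α) / (2 * t)) * b) := by
      continuity
    have := (hcont.tendsto 1).mono_left (nhdsWithin_le_nhds (s := Set.Iio (1:ℝ)))
    convert this using 2
    have ht' : t ≠ 0 := ne_of_gt ht
    field_simp
    ring
  rw [hfv]
  exact ge_of_tendsto hlim (Filter.eventually_of_mem hIoo fun α hα => key α hα)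
end

section
/- For the polar retraction on the Stiefel manifold, there is a second-order agreement bound: for UᵀU = I_C and ξ ∈ T_U M, ‖Retr_U(ξ) − (U + ξ)‖_F ≤ ‖ξ‖_F², where Retr_U(ξ) = (U+ξ)(I_C + ξᵀξ)^{−1/2}. -/
open Matrix BigOperators

/-- The square root of a positive semidefinite matrix, with the meaning it had in Mathlib
(Dec 2024), where it has since been removed. -/
noncomputable def Matrix.PosSemidef.sqrt {n𝕜 : Type*} {𝕜 : Type*} [Fintype n𝕜] [DecidableEq n𝕜]
    [RCLike 𝕜] [PartialOrder 𝕜] [StarOrderedRing 𝕜] {A : Matrix n𝕜 n𝕜 𝕜} (hA : A.PosSemidef) : Matrix n𝕜 n𝕜 𝕜 :=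
  hA.isHermitian.eigenvectorUnitary.1 * diagonal ((↑) ∘ (Real.sqrt ∘ hA.isHermitian.eigenvalues)) *
  (star hA.isHermitian.eigenvectorUnitary : Matrix n𝕜 n𝕜 𝕜)

lemma Matrix.PosSemidef.posSemidef_sqrt {ι : Type*} [Fintype ι] [DecidableEq ι]
    {A : Matrix ι ι ℝ} (hA : A.PosSemidef) : hA.sqrt.PosSemidef := by
  have hD : (diagonal ((↑) ∘ (Real.sqrt ∘ hA.isHermitian.eigenvalues)) : Matrix ι ι ℝ).PosSemidef :=
    PosSemidef.diagonal (fun i => Real.sqrt_nonneg _)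
  have := hD.mul_mul_conjTranspose_same (hA.isHermitian.eigenvectorUnitary : Matrix ι ι ℝ)
  rw [Matrix.PosSemidef.sqrt, ← Matrix.star_eq_conjTranspose] at *
  exact this

lemma Matrix.PosSemidef.sqrt_mul_self {ι : Type*} [Fintype ι] [DecidableEq ι]
    {A : Matrix ι ι ℝ} (hA : A.PosSemidef) : hA.sqrt * hA.sqrt = A := by
  set V : Matrix ι ι ℝ := (hA.isHermitian.eigenvectorUnitary : Matrix ι ι ℝ) with hV
  have hVV : star V * V = 1 := Unitary.coe_star_mul_self _
  have hDD : (diagonal ((↑) ∘ (Real.sqrt ∘ hA.isHermitian.eigenvalues)) : Matrix ι ι ℝ) *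
      diagonal ((↑) ∘ (Real.sqrt ∘ hA.isHermitian.eigenvalues)) =
      diagonal (RCLike.ofReal ∘ hA.isHermitian.eigenvalues) := by
    rw [diagonal_mul_diagonal]
    congr 1
    funext i
    simp [Real.mul_self_sqrt (hA.eigenvalues_nonneg i)]
  have hs : hA.sqrt * hA.sqrt = V * (diagonal ((↑) ∘ (Real.sqrt ∘ hA.isHermitian.eigenvalues)) *
      diagonal ((↑) ∘ (Real.sqrt ∘ hA.isHermitian.eigenvalues))) * star V := by
    rw [Matrix.PosSemidef.sqrt, ← hV]
    calc V * diagonal ((↑) ∘ (Real.sqrt ∘ hA.isHermitian.eigenvalues)) * star V *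
          (V * diagonal ((↑) ∘ (Real.sqrt ∘ hA.isHermitian.eigenvalues)) * star V)
        = V * diagonal ((↑) ∘ (Real.sqrt ∘ hA.isHermitian.eigenvalues)) * (star V * V) *
          diagonal ((↑) ∘ (Real.sqrt ∘ hA.isHermitian.eigenvalues)) * star V := by
          simp only [Matrix.mul_assoc]
      _ = _ := by rw [hVV, Matrix.mul_one]; simp only [Matrix.mul_assoc]
  rw [hs, hDD]
  conv_rhs => rw [hA.isHermitian.spectral_theorem]
  rw [Unitary.conjStarAlgAut_apply]

lemma trace_transpose_mul_self {m k : ℕ} (A : Matrix (Fin m) (Fin k) ℝ) :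
    (Aᵀ * A).trace = ∑ i, ∑ j, (A i j) ^ 2 := by
  rw [Matrix.trace]
  simp only [Matrix.diag_apply, Matrix.mul_apply, Matrix.transpose_apply, sq]
  exact Finset.sum_comm

lemma psd_trace_nonneg {k : ℕ} {A : Matrix (Fin k) (Fin k) ℝ} (hA : A.PosSemidef) :
    0 ≤ A.trace := by
  rw [Matrix.trace]
  refine Finset.sum_nonneg fun i _ => ?_
  exact hA.diag_nonneg

/-- Second-order agreement of the polar retraction on the Stiefel manifold:
‖Retr_U(ξ) − (U+ξ)‖_F ≤ ‖ξ‖_F², where Retr_U(ξ) = (U+ξ)(I + ξᵀξ)^{−1/2}. -/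
theorem stmt_11 (n C : ℕ) (U ξ : Matrix (Fin n) (Fin C) ℝ)
    (hU : Uᵀ * U = 1) (hξ : ξᵀ * U + Uᵀ * ξ = 0)
    (hpsd : (1 + ξᵀ * ξ).PosSemidef) :
    frob ((U + ξ) * hpsd.sqrt⁻¹ - (U + ξ)) ≤ frob ξ ^ 2 := by
  classical
  set S := ξᵀ * ξ with hSdef
  have hSps : S.PosSemidef := by
    have := posSemidef_conjTranspose_mul_self ξ
    rwa [conjTranspose_eq_transpose_of_trivial] at this
  set P := hpsd.sqrt with hPdef
  have hP : P.PosSemidef := hpsd.posSemidef_sqrt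
  have hPP : P * P = 1 + S := hpsd.sqrt_mul_self
  have hPt : Pᵀ = P := by
    have h := hP.isHermitian
    rwa [Matrix.IsHermitian, conjTranspose_eq_transpose_of_trivial] at h
  have hSt : Sᵀ = S := by
    rw [hSdef, Matrix.transpose_mul, Matrix.transpose_transpose]
  -- P is invertible
  have hAdef : (1 + S).PosDef := Matrix.PosDef.add_posSemidef Matrix.PosDef.one hSps
  have hPdet : IsUnit P.det := by
    have h2 : P.det * P.det = (1 + S).det := by rw [← Matrix.det_mul, hPP]
    have h3 := hAdef.det_pos
    rw [← h2] at h3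
    exact isUnit_iff_ne_zero.mpr (fun h => by rw [h, mul_zero] at h3; exact lt_irrefl _ h3)
  have hPinv : P⁻¹ * P = 1 := Matrix.nonsing_inv_mul P hPdet
  have hPinv' : P * P⁻¹ = 1 := Matrix.mul_nonsing_inv P hPdet
  -- Q := P + 1 is invertible
  have hQ : (P + 1).PosDef := Matrix.PosDef.posSemidef_add hP Matrix.PosDef.one
  set M := (P + 1)⁻¹ with hMdef
  have hQdet : IsUnit (P + 1).det := isUnit_iff_ne_zero.mpr hQ.det_pos.ne'
  have hMQ : M * (P + 1) = 1 := Matrix.nonsing_inv_mul _ hQdet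
  have hQM : (P + 1) * M = 1 := Matrix.mul_nonsing_inv _ hQdet
  have hMt : Mᵀ = M := by
    rw [hMdef, Matrix.transpose_nonsing_inv, Matrix.transpose_add, hPt, Matrix.transpose_one]
  -- commutation
  have hQS : (P + 1) * S = S * (P + 1) := by
    have h1 : S = P * P - 1 := by rw [hPP]; abel
    rw [h1]; noncomm_ring
  set B := S * M with hBdef
  have hQB : (P + 1) * B = S := by
    rw [hBdef, ← mul_assoc, hQS, mul_assoc, hQM, mul_one]
  have hBQ : B * (P + 1) = S := by rw [hBdef, mul_assoc, hMQ, mul_one]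
  have hBt : Bᵀ = B := by
    have : Bᵀ = M * S := by rw [hBdef, Matrix.transpose_mul, hSt, hMt]
    rw [this]
    calc M * S = M * ((P + 1) * B) := by rw [hQB]
      _ = (M * (P + 1)) * B := by rw [mul_assoc]
      _ = B := by rw [hMQ, one_mul]
  have hPB : P - 1 = B := by
    calc P - 1 = (P - 1) * ((P + 1) * M) := by rw [hQM, mul_one]
      _ = ((P - 1) * (P + 1)) * M := by rw [mul_assoc]
      _ = S * M := by
          congr 1
          have : (P - 1) * (P + 1) = P * P - 1 := by noncomm_ring
          rw [this, hPP]; abel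
  set X := (U + ξ) * P⁻¹ - (U + ξ) with hXdef
  have hUξ : (U + ξ)ᵀ * (U + ξ) = 1 + S := by
    have expand : (U + ξ)ᵀ * (U + ξ) = Uᵀ * U + (ξᵀ * U + Uᵀ * ξ) + ξᵀ * ξ := by
      rw [Matrix.transpose_add, Matrix.add_mul, Matrix.mul_add, Matrix.mul_add]; abel
    rw [expand, hU, hξ, add_zero]
  have hXt : X = (U + ξ) * (P⁻¹ - 1) := by rw [hXdef, Matrix.mul_sub, Matrix.mul_one]
  have h1 : Xᵀ * X = (P⁻¹ - 1)ᵀ * ((U + ξ)ᵀ * (U + ξ)) * (P⁻¹ - 1) := by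
    rw [hXt, Matrix.transpose_mul]
    simp only [Matrix.mul_assoc]
  have h2 : (P⁻¹ - 1)ᵀ = P⁻¹ - 1 := by
    rw [Matrix.transpose_sub, Matrix.transpose_nonsing_inv, hPt, Matrix.transpose_one]
  have h3 : Xᵀ * X = B * B := by
    rw [h1, h2, hUξ, ← hPP, ← hPB]
    have e1 : (P⁻¹ - 1) * (P * P) = P - P * P := by
      rw [sub_mul, one_mul, ← mul_assoc, hPinv, one_mul]
    rw [e1]
    have e2 : (P - P * P) * (P⁻¹ - 1) = P * P⁻¹ - P - (P * P * P⁻¹ - P * P) := by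
      noncomm_ring
    rw [e2, mul_assoc P P P⁻¹, hPinv']
    noncomm_ring
  set W := (P + 1) * (P + 1) - 1 with hWdef
  have hWps : W.PosSemidef := by
    have hW2 : W = (1 + S) + (P + P) := by rw [hWdef, ← hPP]; noncomm_ring
    rw [hW2]; exact hpsd.add (hP.add hP)
  have hBWB : B * W * B = S * S - B * B := by
    rw [hWdef]
    have e3 : B * ((P + 1) * (P + 1) - 1) * B
        = (B * (P + 1)) * ((P + 1) * B) - B * B := by noncomm_ring
    rw [e3, hBQ, hQB]
  have hBWBps : (B * W * B).PosSemidef := by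
    have h4 := hWps.conjTranspose_mul_mul_same B
    rwa [conjTranspose_eq_transpose_of_trivial, hBt] at h4
  have hle1 : (B * B).trace ≤ (S * S).trace := by
    have h0 := psd_trace_nonneg hBWBps
    rw [hBWB, Matrix.trace_sub] at h0
    linarith
  have hSdiag : ∀ i, S i i = ∑ k, ξ k i ^ 2 := fun i => by
    simp [hSdef, Matrix.mul_apply, sq]
  have htrS : S.trace = ∑ i, ∑ k, ξ k i ^ 2 := by
    rw [Matrix.trace]; exact Finset.sum_congr rfl fun i _ => hSdiag i
  have htrS0 : 0 ≤ S.trace := psd_trace_nonneg hSps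
  have hle2 : (S * S).trace ≤ S.trace ^ 2 := by
    have hSS : (S * S).trace = ∑ i, ∑ j, S i j ^ 2 := by
      have h5 := trace_transpose_mul_self S
      rwa [hSt] at h5
    rw [hSS]
    have hCS : ∀ i j : Fin C, S i j ^ 2 ≤ S i i * S j j := by
      intro i j
      have h := Finset.sum_mul_sq_le_sq_mul_sq Finset.univ (fun k => ξ k i) (fun k => ξ k j)
      calc S i j ^ 2 = (∑ k, ξ k i * ξ k j) ^ 2 := by rw [hSdef]; simp [Matrix.mul_apply]
        _ ≤ (∑ k, ξ k i ^ 2) * (∑ k, ξ k j ^ 2) := h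
        _ = S i i * S j j := by rw [hSdiag, hSdiag]
    calc ∑ i, ∑ j, S i j ^ 2 ≤ ∑ i, ∑ j, S i i * S j j :=
        Finset.sum_le_sum fun i _ => Finset.sum_le_sum fun j _ => hCS i j
      _ = S.trace ^ 2 := by
        rw [Matrix.trace, sq, Finset.sum_mul_sum]
        rfl
  have hfξ : frob ξ ^ 2 = S.trace := by
    rw [frob, Real.sq_sqrt (by positivity)]
    rw [htrS]; exact Finset.sum_comm
  calc frob X = Real.sqrt ((Xᵀ * X).trace) := by rw [frob, trace_transpose_mul_self]
    _ = Real.sqrt ((B * B).trace) := by rw [h3]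
    _ ≤ Real.sqrt (S.trace ^ 2) := Real.sqrt_le_sqrt (le_trans hle1 hle2)
    _ = S.trace := Real.sqrt_sq htrS0
    _ = frob ξ ^ 2 := hfξ.symm
end

section
/- Let f be L_f-smooth (∇f Lipschitz with constant L_f), and suppose the retraction satisfies ‖Retr_U(ξ) − U‖_F ≤ M₁‖ξ‖_F and ‖Retr_U(ξ) − (U+ξ)‖_F ≤ M₂‖ξ‖_F². Then for U⁺ = Retr_U(αV) with α ∈ [0,1]: f(U⁺) − f(U) ≤ α⟨∇f(U), V⟩ + (M₂‖∇f(U)‖_F + M₁²L_f/2) α² ‖V‖_F². -/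
open Matrix BigOperators

lemma frob_nonneg {m k : ℕ} (A : Matrix (Fin m) (Fin k) ℝ) : 0 ≤ frob A :=
  Real.sqrt_nonneg _

lemma inp_le_frob {m k : ℕ} (A B : Matrix (Fin m) (Fin k) ℝ) :
    inp A B ≤ frob A * frob B := by
  have h := Real.sum_mul_le_sqrt_mul_sqrt (Finset.univ : Finset (Fin m × Fin k))
    (fun p => A p.1 p.2) (fun p => B p.1 p.2)
  simpa [inp, frob, Fintype.sum_prod_type] using h

lemma frob_smul {m k : ℕ} (a : ℝ) (A : Matrix (Fin m) (Fin k) ℝ) :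
    frob (a • A) = |a| * frob A := by
  simp only [frob, Matrix.smul_apply, smul_eq_mul, mul_pow, ← Finset.mul_sum]
  rw [Real.sqrt_mul (sq_nonneg a), Real.sqrt_sq_eq_abs]

lemma inp_add {m k : ℕ} (G A B : Matrix (Fin m) (Fin k) ℝ) :
    inp G (A + B) = inp G A + inp G B := by
  simp [inp, Matrix.add_apply, mul_add, Finset.sum_add_distrib]

lemma inp_sub_left {m k : ℕ} (A B W : Matrix (Fin m) (Fin k) ℝ) :
    inp A W - inp B W = inp (A - B) W := by
  simp [inp, Matrix.sub_apply, sub_mul, Finset.sum_sub_distrib]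

lemma inp_smul {m k : ℕ} (G : Matrix (Fin m) (Fin k) ℝ) (a : ℝ)
    (A : Matrix (Fin m) (Fin k) ℝ) : inp G (a • A) = a * inp G A := by
  simp only [inp, Matrix.smul_apply, smul_eq_mul, Finset.mul_sum]
  apply Finset.sum_congr rfl; intro i _
  apply Finset.sum_congr rfl; intro j _
  ring

lemma descent {n C : ℕ} (Lf : ℝ) (f : Matrix (Fin n) (Fin C) ℝ → ℝ)
    (gradf : Matrix (Fin n) (Fin C) ℝ → Matrix (Fin n) (Fin C) ℝ)
    (hderiv : ∀ (X W : Matrix (Fin n) (Fin C) ℝ) (s : ℝ),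
      HasDerivAt (fun r : ℝ => f (X + r • W)) (inp (gradf (X + s • W)) W) s)
    (hLip : ∀ X Y : Matrix (Fin n) (Fin C) ℝ,
      frob (gradf X - gradf Y) ≤ Lf * frob (X - Y))
    (X W : Matrix (Fin n) (Fin C) ℝ) :
    f (X + W) - f X ≤ inp (gradf X) W + Lf / 2 * frob W ^ 2 := by
  set c := inp (gradf X) W with hc
  set K := Lf * frob W ^ 2 with hK
  set φ : ℝ → ℝ := fun s => f (X + s • W) - s * c - s ^ 2 / 2 * K with hφ
  have hd : ∀ s : ℝ, HasDerivAt φ (inp (gradf (X + s • W)) W - c - s * K) s := by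
    intro s
    have h1 := hderiv X W s
    have h2 : HasDerivAt (fun s : ℝ => s * c) c s := by
      simpa using (hasDerivAt_id s).mul_const c
    have h3 : HasDerivAt (fun s : ℝ => s ^ 2 / 2 * K) (s * K) s := by
      have := ((hasDerivAt_pow 2 s).div_const 2).mul_const K
      simpa using this.congr_deriv (by ring)
    exact (h1.sub h2).sub h3
  have hmono : AntitoneOn φ (Set.Icc (0:ℝ) 1) := by
    apply antitoneOn_of_deriv_nonpos (convex_Icc 0 1)
    · exact fun s _ => (hd s).continuousAt.continuousWithinAt
    · exact fun s _ => (hd s).differentiableAt.differentiableWithinAt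
    · intro s hs
      rw [interior_Icc] at hs
      rw [(hd s).deriv]
      have hsub : inp (gradf (X + s • W)) W - c = inp (gradf (X + s • W) - gradf X) W := by
        rw [hc, inp_sub_left]
      have hcs := inp_le_frob (gradf (X + s • W) - gradf X) W
      have hlip := hLip (X + s • W) X
      have heq : X + s • W - X = s • W := by abel
      rw [heq, frob_smul, abs_of_nonneg (le_of_lt hs.1)] at hlip
      have hWn := frob_nonneg W
      have h2 : frob (gradf (X + s • W) - gradf X) * frob W
          ≤ Lf * (s * frob W) * frob W := mul_le_mul_of_nonneg_right hlip hWn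
      have h3 : s * K = Lf * (s * frob W) * frob W := by rw [hK]; ring
      linarith [hsub.le, hcs, h2]
  have h01 := hmono (Set.mem_Icc.2 ⟨le_refl 0, zero_le_one⟩)
    (Set.mem_Icc.2 ⟨zero_le_one, le_refl 1⟩) zero_le_one
  have h0 : φ 0 = f X := by simp [hφ]
  have h1 : φ 1 = f (X + W) - c - K / 2 := by simp [hφ]; ring
  rw [h0, h1] at h01
  rw [hc, hK] at *
  linarith

/-- Smooth-part descent through the retraction: if f is L_f-smooth with gradient gradf
and the retracted point R = Retr_U(αV) satisfies the two retraction bounds, then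
f(R) − f(U) ≤ α⟨∇f(U),V⟩ + (M₂‖∇f(U)‖_F + M₁²L_f/2)α²‖V‖_F². -/
theorem stmt_13 (n C : ℕ) (Lf M₁ M₂ : ℝ)
    (f : Matrix (Fin n) (Fin C) ℝ → ℝ)
    (gradf : Matrix (Fin n) (Fin C) ℝ → Matrix (Fin n) (Fin C) ℝ)
    -- f is differentiable with gradient gradf (directional derivatives along every line)
    (hderiv : ∀ (X W : Matrix (Fin n) (Fin C) ℝ) (s : ℝ),
      HasDerivAt (fun r : ℝ => f (X + r • W)) (inp (gradf (X + s • W)) W) s)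
    -- gradf is Lf-Lipschitz
    (hLip : ∀ X Y : Matrix (Fin n) (Fin C) ℝ,
      frob (gradf X - gradf Y) ≤ Lf * frob (X - Y))
    (U V R : Matrix (Fin n) (Fin C) ℝ) (α : ℝ) (hα0 : 0 ≤ α) (hα1 : α ≤ 1)
    -- retraction bounds at ξ = αV, R = Retr_U(αV)
    (hR1 : frob (R - U) ≤ M₁ * frob (α • V))
    (hR2 : frob (R - (U + α • V)) ≤ M₂ * frob (α • V) ^ 2) :
    f R - f U ≤ α * inp (gradf U) V
      + (M₂ * frob (gradf U) + M₁ ^ 2 * Lf / 2) * α ^ 2 * frob V ^ 2 := by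
  rcases Nat.eq_zero_or_pos n with hn | hn
  · subst hn
    have : R = U := Subsingleton.elim R U
    simp [this, inp, frob]
  rcases Nat.eq_zero_or_pos C with hC | hC
  · subst hC
    have : R = U := Subsingleton.elim R U
    simp [this, inp, frob]
  -- Lf ≥ 0
  have hLf : 0 ≤ Lf := by
    have hX : frob ((Matrix.of fun _ _ => (1:ℝ)) - (0 : Matrix (Fin n) (Fin C) ℝ))
        = Real.sqrt (n * C) := by
      norm_num [frob, Finset.sum_const]
    have h := hLip (Matrix.of fun _ _ => (1:ℝ)) 0
    rw [hX] at h
    have hpos : 0 < Real.sqrt (n * C) := by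
      apply Real.sqrt_pos.2
      positivity
    nlinarith [frob_nonneg ((gradf (Matrix.of fun _ _ => (1:ℝ))) - gradf 0)]
  have hdesc := descent Lf f gradf hderiv hLip U (R - U)
  rw [add_sub_cancel] at hdesc
  have hsplit : inp (gradf U) (R - U)
      = α * inp (gradf U) V + inp (gradf U) (R - (U + α • V)) := by
    have : R - U = α • V + (R - (U + α • V)) := by abel
    rw [this, inp_add, inp_smul]
  have hcs := inp_le_frob (gradf U) (R - (U + α • V))
  have hsm : frob (α • V) = α * frob V := by
    rw [frob_smul, abs_of_nonneg hα0]
  rw [hsm] at hR1 hR2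
  have hG := frob_nonneg (gradf U)
  have hV := frob_nonneg V
  have hRU := frob_nonneg (R - U)
  have hR2' : inp (gradf U) (R - (U + α • V)) ≤ frob (gradf U) * (M₂ * (α * frob V) ^ 2) :=
    hcs.trans (mul_le_mul_of_nonneg_left hR2 hG)
  have hsq : frob (R - U) ^ 2 ≤ (M₁ * (α * frob V)) ^ 2 := by
    have hMnn : 0 ≤ M₁ * (α * frob V) := le_trans hRU hR1
    nlinarith
  nlinarith [mul_le_mul_of_nonneg_left hsq (by linarith : (0:ℝ) ≤ Lf / 2)]
end
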